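/- arXiv:1205.6748 — 4 statements merged into one kernel-verified Lean document; each statement's English description precedes it below -/
import Mathlib

section
/- Let (W₁,S₁) and (W₂,S₂) be finite Coxeter systems such that (W₂,S₂) is a quasi subsystem of (W₁,S₁). Then for all x, y ∈ W₂, if x ≤₂ y then x ≤₁ y, where ≤ᵢ denotes the Bruhat order of (Wᵢ,Sᵢ). -/
/-!
Rewrite every simple reflection of `(W₂,S₂)` as a reduced word of `(W₁,S₁)`. Substituting these
into a word of `(W₂,S₂)` gives a word of `(W₁,S₁)` for the same element whose length is the sum of
the `ℓ₁`-lengths of its letters, so the quasi-subsystem condition says exactly that reduced words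
go to reduced words. Since the substitution is applied letter by letter, it also preserves
subwords, which transports the subword characterization of the Bruhat order.
-/

/-- The Bruhat order of a Coxeter system: `x ≤ y` iff some reduced word for `y` contains a
subword which is a reduced word for `x`. -/
def CoxeterSystem.bruhatLE {B W : Type*} [Group W] {M : CoxeterMatrix B}
    (cs : CoxeterSystem M W) (x y : W) : Prop :=
  ∃ ω : List B, cs.IsReduced ω ∧ cs.wordProd ω = y ∧
    ∃ ω' : List B, ω'.Sublist ω ∧ cs.IsReduced ω' ∧ cs.wordProd ω' = x

/-- `(W₂,S₂)` (realized as a Coxeter system `cs₂` on a subgroup `H` of `W₁`) is a quasi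
subsystem of `(W₁,S₁)` (realized as the Coxeter system `cs₁` on `W₁`): for every reduced
expression `w = s₁ ⋯ s_k` in `(W₂,S₂)` one has `ℓ₁(w) = ℓ₁(s₁) + ⋯ + ℓ₁(s_k)`. -/
def IsQuasiSubsystem {B₁ B₂ W₁ : Type*} [Group W₁] {M₁ : CoxeterMatrix B₁}
    {M₂ : CoxeterMatrix B₂} (cs₁ : CoxeterSystem M₁ W₁) {H : Subgroup W₁}
    (cs₂ : CoxeterSystem M₂ H) : Prop :=
  ∀ ω : List B₂, cs₂.IsReduced ω →
    cs₁.length ((cs₂.wordProd ω : H) : W₁) =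
      (ω.map fun i => cs₁.length ((cs₂.simple i : H) : W₁)).sum

namespace CoxeterSystem

variable {B W : Type*} [Group W] {M : CoxeterMatrix B} (cs : CoxeterSystem M W)

noncomputable def reducedWord (w : W) : List B := (cs.exists_isReduced w).choose

theorem isReduced_reducedWord (w : W) : cs.IsReduced (cs.reducedWord w) :=
  (cs.exists_isReduced w).choose_spec.1

theorem wordProd_reducedWord (w : W) : cs.wordProd (cs.reducedWord w) = w :=
  (cs.exists_isReduced w).choose_spec.2.symm

theorem length_reducedWord (w : W) : (cs.reducedWord w).length = cs.length w := by
  rw [← cs.isReduced_reducedWord w, cs.wordProd_reducedWord]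

end CoxeterSystem

section QuasiSubsystem

variable {B₁ B₂ W₁ : Type*} [Group W₁] {M₁ : CoxeterMatrix B₁} {M₂ : CoxeterMatrix B₂}
  (cs₁ : CoxeterSystem M₁ W₁) {H : Subgroup W₁} (cs₂ : CoxeterSystem M₂ H)

noncomputable def liftWord (ω : List B₂) : List B₁ :=
  ω.flatMap fun i => cs₁.reducedWord (cs₂.simple i : W₁)

theorem wordProd_liftWord (ω : List B₂) :
    cs₁.wordProd (liftWord cs₁ cs₂ ω) = (cs₂.wordProd ω : W₁) := by
  induction ω with
  | nil => simp [liftWord]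
  | cons i ω ih =>
    rw [liftWord, List.flatMap_cons, cs₁.wordProd_append, ← liftWord, ih,
      cs₁.wordProd_reducedWord, cs₂.wordProd_cons, Subgroup.coe_mul]

theorem length_liftWord (ω : List B₂) :
    (liftWord cs₁ cs₂ ω).length = (ω.map fun i => cs₁.length (cs₂.simple i : W₁)).sum := by
  simp [liftWord, List.length_flatMap, cs₁.length_reducedWord]

theorem liftWord_sublist {ω' ω : List B₂} (h : ω'.Sublist ω) :
    (liftWord cs₁ cs₂ ω').Sublist (liftWord cs₁ cs₂ ω) :=
  h.flatMap _

variable {cs₁ cs₂}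

theorem IsQuasiSubsystem.isReduced_liftWord (hq : IsQuasiSubsystem cs₁ cs₂) {ω : List B₂}
    (hω : cs₂.IsReduced ω) : cs₁.IsReduced (liftWord cs₁ cs₂ ω) := by
  rw [CoxeterSystem.IsReduced, wordProd_liftWord, length_liftWord, hq ω hω]

end QuasiSubsystem

theorem quasiSubsystem_bruhatLE_mono_general {B₁ B₂ W₁ : Type*} [Group W₁]
    {M₁ : CoxeterMatrix B₁} {M₂ : CoxeterMatrix B₂}
    (cs₁ : CoxeterSystem M₁ W₁) {H : Subgroup W₁} (cs₂ : CoxeterSystem M₂ H)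
    (hq : IsQuasiSubsystem cs₁ cs₂) (x y : H) (hxy : cs₂.bruhatLE x y) :
    cs₁.bruhatLE (x : W₁) (y : W₁) := by
  obtain ⟨ω, hω, rfl, ω', hsub, hω', rfl⟩ := hxy
  exact ⟨liftWord cs₁ cs₂ ω, hq.isReduced_liftWord hω, wordProd_liftWord cs₁ cs₂ ω,
    liftWord cs₁ cs₂ ω', liftWord_sublist cs₁ cs₂ hsub, hq.isReduced_liftWord hω',
    wordProd_liftWord cs₁ cs₂ ω'⟩

/-- If `(W₂,S₂)` is a quasi subsystem of `(W₁,S₁)`, then `x ≤₂ y` implies `x ≤₁ y`. -/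
theorem quasiSubsystem_bruhatLE_mono {B₁ B₂ W₁ : Type*} [Group W₁] [Finite W₁]
    {M₁ : CoxeterMatrix B₁} {M₂ : CoxeterMatrix B₂}
    (cs₁ : CoxeterSystem M₁ W₁) {H : Subgroup W₁} (cs₂ : CoxeterSystem M₂ H)
    (hq : IsQuasiSubsystem cs₁ cs₂) (x y : H) (hxy : cs₂.bruhatLE x y) :
    cs₁.bruhatLE (x : W₁) (y : W₁) :=
  quasiSubsystem_bruhatLE_mono_general cs₁ cs₂ hq x y hxy
end

section
/- Let (W₁,S₁) and (W₂,S₂) be finite Coxeter systems such that (W₂,S₂) is a quasi subsystem of (W₁,S₁), and assume the following condition (C): for any x, y ∈ W₂ and s ∈ S₂ such that x ≤₁ y, ℓ₁(sy) < ℓ₁(y), and ℓ₁(x) < ℓ₁(sx), one has sx ≤₁ y. Then for all x, y ∈ W₂, if x ≤₁ y then x ≤₂ y. -/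
/-!
Induct on `2 ℓ₁(y) - ℓ₁(x)` and pick a left descent `s ∈ S₂` of `y`. By quasi-subsystem
additivity, `ℓ₁(s w) = ℓ₁(w) ∓ ℓ₁(s)` for `w ∈ W₂` according as `s` is or is not a left descent
of `w` in `W₂`. If it is one of `x`, then a reduced `W₁`-word for `s` strips one simple reflection
at a time off both `x` and `y`, each lowering both lengths, so the lifting property of `≤₁` gives
`s x ≤₁ s y`; by induction `s x ≤₂ s y`, hence `x ≤₂ y`. Otherwise (C) gives `s x ≤₁ y`, by
induction `s x ≤₂ y`, and `x ≤₂ s x`.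

The lifting property needs the subword property for every reduced word of `y`, not just for one.
It comes from the description of the Bruhat order by chains `x → t x` (`t` a reflection, length
increasing), which rests on the strong exchange condition. That in turn is proved with the
Björner–Brenti parity representation: `s` acts on `W × ZMod 2` by `(t, ε) ↦ (s t s, ε + [t = s])`.
It shows that the parity of the number of occurrences of `t` in the left inversion sequence of a
word for `w` depends only on `w`, and changes under `w ↦ t w`; hence a left inversion `t` of `w`
occurs in the left inversion sequence of every word for `w`.
-/

namespace CoxeterSystem

open List

variable {B W : Type*} [Group W] {M : CoxeterMatrix B} (cs : CoxeterSystem M W)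

local prefix:100 "s " => cs.simple
local prefix:100 "π " => cs.wordProd
local prefix:100 "ℓ " => cs.length
local prefix:100 "lis " => cs.leftInvSeq

theorem prod_map_alternatingWord_two_mul {G : Type*} [Monoid G] (f : B → G) (i j : B) (m : ℕ) :
    ((alternatingWord i j (2 * m)).map f).prod = (f i * f j) ^ m := by
  induction m with
  | zero => simp [alternatingWord]
  | succ m ih =>
    rw [show 2 * (m + 1) = 2 * m + 1 + 1 by ring, alternatingWord_succ, alternatingWord_succ]
    simp [ih, pow_succ]

section ParityRepresentation

variable [DecidableEq W]

def parityPerm (i : B) : Equiv.Perm (W × ZMod 2) :=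
  Function.Involutive.toPerm (fun p ↦ (s i * p.1 * s i, p.2 + if p.1 = s i then 1 else 0)) <| by
    rintro ⟨t, ε⟩
    have : s i * t * s i = s i ↔ t = s i := by
      rw [mul_eq_right, mul_eq_one_iff_inv_eq, inv_simple, eq_comm]
    refine Prod.ext (by simp [mul_assoc]) ?_
    by_cases h : t = s i <;> simp [this, h, add_assoc, CharTwo.add_self_eq_zero]

theorem parityPerm_apply (i : B) (t : W) (ε : ZMod 2) :
    cs.parityPerm i (t, ε) = (s i * t * s i, ε + if t = s i then 1 else 0) :=
  rfl

theorem prod_map_parityPerm_apply (ω : List B) (t : W) (ε : ZMod 2) :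
    (ω.map cs.parityPerm).prod (t, ε) =
      (π ω * t * (π ω)⁻¹, ε + ((lis ω).count (π ω * t * (π ω)⁻¹) : ZMod 2)) := by
  induction ω with
  | nil => simp
  | cons i ω ih =>
    set u := π ω * t * (π ω)⁻¹
    have hu : π (i :: ω) * t * (π (i :: ω))⁻¹ = MulAut.conj (s i) u := by
      simp [u, wordProd_cons, mul_assoc]
    rw [hu, map_cons, prod_cons, Equiv.Perm.mul_apply, ih, leftInvSeq, count_cons,
      count_map_of_injective _ _ (MulAut.conj (s i)).injective]
    have hs : s i * u = 1 ↔ u = s i := by rw [mul_eq_one_iff_inv_eq, inv_simple, eq_comm]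
    simp [parityPerm_apply, hs, add_assoc]

theorem count_leftInvSeq_alternatingWord (i j : B) (t : W) :
    ((lis (alternatingWord i j (2 * M i j))).count t : ZMod 2) = 0 := by
  set f : ℕ → W := fun k ↦ s i * (s j * s i) ^ k
  have hf : (fun k ↦ f (M i j + k)) = f := by
    funext k
    simp [f, pow_add]
  have hL : lis (alternatingWord i j (2 * M i j)) = (range (2 * M i j)).map f := by
    refine ext_getElem (by simp) fun k hk _ ↦ ?_
    rw [getElem_leftInvSeq_alternatingWord cs i j _ k (by simpa using hk),
      prod_alternatingWord_eq_mul_pow]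
    simp [f, Nat.not_even_bit1, show (2 * k + 1) / 2 = k by omega]
  rw [hL, two_mul, range_add, map_append, map_map, Function.comp_def, hf, count_append,
    Nat.cast_add, CharTwo.add_self_eq_zero]

theorem isLiftable_parityPerm : M.IsLiftable cs.parityPerm := by
  intro i j
  ext1 ⟨t, ε⟩
  rw [← prod_map_alternatingWord_two_mul, prod_map_parityPerm_apply,
    prod_alternatingWord_eq_mul_pow]
  simp [count_leftInvSeq_alternatingWord]

def parityRep : W →* Equiv.Perm (W × ZMod 2) :=
  cs.lift ⟨cs.parityPerm, cs.isLiftable_parityPerm⟩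

theorem parityRep_wordProd (ω : List B) : cs.parityRep (π ω) = (ω.map cs.parityPerm).prod := by
  rw [wordProd, map_list_prod, map_map]
  congr 2
  funext i
  exact cs.lift_apply_simple cs.isLiftable_parityPerm i

def reflectionParity (w t : W) : ZMod 2 :=
  (cs.parityRep w (w⁻¹ * t * w, 0)).2

theorem reflectionParity_wordProd (ω : List B) (t : W) :
    cs.reflectionParity (π ω) t = (lis ω).count t := by
  simp [reflectionParity, parityRep_wordProd, prod_map_parityPerm_apply, mul_assoc]

theorem parityRep_apply (w u : W) (ε : ZMod 2) :
    cs.parityRep w (u, ε) = (w * u * w⁻¹, ε + cs.reflectionParity w (w * u * w⁻¹)) := by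
  obtain ⟨ω, rfl⟩ := cs.wordProd_surjective w
  rw [reflectionParity_wordProd, parityRep_wordProd, prod_map_parityPerm_apply]

theorem reflectionParity_mul (g h t : W) :
    cs.reflectionParity (g * h) t =
      cs.reflectionParity g t + cs.reflectionParity h (g⁻¹ * t * g) := by
  have e₁ : h * ((g * h)⁻¹ * t * (g * h)) * h⁻¹ = g⁻¹ * t * g := by group
  have e₂ : g * (g⁻¹ * t * g) * g⁻¹ = t := by group
  rw [reflectionParity, map_mul, Equiv.Perm.mul_apply, parityRep_apply cs h, e₁, zero_add,
    parityRep_apply, e₂, add_comm]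

theorem reflectionParity_one (t : W) : cs.reflectionParity 1 t = 0 := by
  simp [reflectionParity]

theorem reflectionParity_self {t : W} (ht : cs.IsReflection t) :
    cs.reflectionParity t t = 1 := by
  obtain ⟨u, i, rfl⟩ := ht
  have e₁ : u⁻¹ * (u * s i * u⁻¹) * u = s i := by group
  have e₂ : (u * s i)⁻¹ * (u * s i * u⁻¹) * (u * s i) = s i := by group
  have h₁ := cs.reflectionParity_mul u u⁻¹ (u * s i * u⁻¹)
  rw [mul_inv_cancel, reflectionParity_one, e₁] at h₁
  have h₂ : cs.reflectionParity (s i) (s i) = 1 := by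
    simpa using cs.reflectionParity_wordProd [i] (s i)
  rw [reflectionParity_mul, reflectionParity_mul, e₁, e₂, h₂]
  linear_combination -h₁

theorem reflectionParity_mul_left {t : W} (ht : cs.IsReflection t) (w : W) :
    cs.reflectionParity (t * w) t = cs.reflectionParity w t + 1 := by
  rw [reflectionParity_mul, reflectionParity_self cs ht, ht.inv, ht.mul_self, one_mul, add_comm]

end ParityRepresentation

theorem mem_leftInvSeq_of_isLeftInversion {ω : List B} {t : W}
    (ht : cs.IsLeftInversion (π ω) t) : t ∈ lis ω := by
  classical
  by_contra hmem
  obtain ⟨ω', hω', he⟩ := cs.exists_isReduced (t * π ω)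
  have hcount : ((lis ω').count t : ZMod 2) = 1 := by
    rw [← reflectionParity_wordProd, ← he, reflectionParity_mul_left cs ht.1,
      reflectionParity_wordProd, count_eq_zero_of_not_mem hmem, Nat.cast_zero, zero_add]
  have hmem' : t ∈ lis ω' :=
    count_pos_iff.mp (Nat.pos_of_ne_zero fun h ↦ by simp [h] at hcount)
  have := (cs.isLeftInversion_of_mem_leftInvSeq hω' hmem').2
  rw [← he, ← mul_assoc, ht.1.mul_self, one_mul] at this
  exact lt_asymm ht.2 this

theorem exists_eraseIdx_of_isLeftInversion {ω : List B} {t : W}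
    (ht : cs.IsLeftInversion (π ω) t) : ∃ j < ω.length, t * π ω = π (ω.eraseIdx j) := by
  obtain ⟨j, hj, rfl⟩ := getElem_of_mem (cs.mem_leftInvSeq_of_isLeftInversion ht)
  refine ⟨j, by simpa using hj, ?_⟩
  rw [← getD_leftInvSeq_mul_wordProd, getD_eq_getElem]

theorem IsReduced.cons {cs : CoxeterSystem M W} {ω : List B} (hω : cs.IsReduced ω) {i : B}
    (hi : ¬cs.IsLeftDescent (cs.wordProd ω) i) : cs.IsReduced (i :: ω) := by
  rw [IsReduced, wordProd_cons, length_cons, cs.not_isLeftDescent_iff.mp hi, hω.eq]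

theorem exists_isReduced_cons_of_isLeftDescent {w : W} {i : B} (hi : cs.IsLeftDescent w i) :
    ∃ ρ, cs.IsReduced (i :: ρ) ∧ w = π (i :: ρ) := by
  obtain ⟨ρ, hρ, he⟩ := cs.exists_isReduced (s i * w)
  refine ⟨ρ, hρ.cons ?_, by rw [wordProd_cons, ← he, simple_mul_simple_cancel_left]⟩
  rwa [← he, ← isLeftDescent_iff_not_isLeftDescent_mul]

theorem exists_isReduced_sublist (ω : List B) :
    ∃ τ, τ <+ ω ∧ cs.IsReduced τ ∧ π τ = π ω := by
  induction ω with
  | nil => exact ⟨[], Sublist.slnil, by simp [IsReduced], rfl⟩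
  | cons i ω ih =>
    obtain ⟨τ, hτω, hτ, he⟩ := ih
    by_cases hi : cs.IsLeftDescent (π τ) i
    · obtain ⟨j, hj, hj'⟩ :=
        cs.exists_eraseIdx_of_isLeftInversion ⟨cs.isReflection_simple i, hi⟩
      refine ⟨τ.eraseIdx j, (eraseIdx_sublist τ j).trans (hτω.trans (sublist_cons_self i ω)),
        ?_, by rw [← hj', he, wordProd_cons]⟩
      have := cs.isLeftDescent_iff.mp hi
      rw [hτ.eq] at this
      rw [IsReduced, ← hj', length_eraseIdx_of_lt hj]
      omega
    · exact ⟨i :: τ, hτω.cons_cons i, hτ.cons hi, by rw [wordProd_cons, wordProd_cons, he]⟩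

def ChainLE : W → W → Prop :=
  Relation.ReflTransGen fun x y ↦ ∃ t, cs.IsReflection t ∧ y = t * x ∧ ℓ x < ℓ y

theorem exists_sublist_of_chainLE {x y : W} (h : cs.ChainLE x y) {ω : List B}
    (hω : cs.IsReduced ω) (hy : π ω = y) : ∃ τ, τ <+ ω ∧ cs.IsReduced τ ∧ π τ = x := by
  induction h generalizing ω with
  | refl => exact ⟨ω, Sublist.refl ω, hω, hy⟩
  | @tail z _ _ hzy ih =>
    obtain ⟨t, ht, rfl, hlt⟩ := hzy
    have hz : t * π ω = z := by rw [hy, ← mul_assoc, ht.mul_self, one_mul]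
    obtain ⟨j, -, hj⟩ :=
      cs.exists_eraseIdx_of_isLeftInversion (ω := ω) ⟨ht, by rwa [hz, hy]⟩
    obtain ⟨ζ, hζ, hζred, hζe⟩ := cs.exists_isReduced_sublist (ω.eraseIdx j)
    obtain ⟨τ, hτ, hτred, hτe⟩ := ih hζred (by rw [hζe, ← hj, hz])
    exact ⟨τ, hτ.trans (hζ.trans (eraseIdx_sublist ω j)), hτred, hτe⟩

theorem simple_mul_chainLE_or_of_isReflection {z t : W} (ht : cs.IsReflection t)
    (hz : ℓ z < ℓ (t * z)) (i : B) :
    cs.ChainLE (s i * z) (t * z) ∨ cs.ChainLE (s i * z) (s i * (t * z)) := by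
  have hconj : s i * (t * z) = s i * t * (s i)⁻¹ * (s i * z) := by group
  by_cases hlt : ℓ (s i * z) < ℓ (s i * (t * z))
  · exact .inr (.single ⟨_, ht.conj (s i), hconj, hlt⟩)
  -- Now `s` is a left descent of `t z`; exchanging `t` against a reduced word `s ρ` of `t z`
  -- must delete the leading `s`, since any other deletion would give `ℓ (s z) ≤ ℓ (s t z)`.
  left
  have hne := (ht.conj (s i)).length_mul_right_ne (s i * z)
  rw [← hconj] at hne
  have hdesc : cs.IsLeftDescent (t * z) i := by
    unfold IsLeftDescent
    rcases cs.length_simple_mul z i with h | h <;>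
      rcases cs.length_simple_mul (t * z) i with h' | h' <;> omega
  obtain ⟨ρ, hρ, he⟩ := cs.exists_isReduced_cons_of_isLeftDescent hdesc
  have htz : t * π (i :: ρ) = z := by rw [← he, ← mul_assoc, ht.mul_self, one_mul]
  obtain ⟨j, -, hj⟩ :=
    cs.exists_eraseIdx_of_isLeftInversion (ω := i :: ρ) ⟨ht, by rwa [htz, ← he]⟩
  rw [htz] at hj
  cases j with
  | zero =>
    rw [he, hj, eraseIdx_cons_zero, wordProd_cons]
    exact .refl
  | succ k =>
    exfalso
    rw [eraseIdx_cons_succ, wordProd_cons] at hj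
    have hρ' : ℓ (π ρ) = ρ.length := by simpa using (hρ.drop 1).eq
    have := cs.length_wordProd_le (ρ.eraseIdx k)
    have := length_eraseIdx_le ρ k
    rw [he, wordProd_cons, simple_mul_simple_cancel_left, hj, simple_mul_simple_cancel_left]
      at hlt hne
    omega

theorem simple_mul_chainLE_or {x y : W} (h : cs.ChainLE x y) (i : B) :
    cs.ChainLE (s i * x) y ∨ cs.ChainLE (s i * x) (s i * y) := by
  induction h with
  | refl => exact .inr .refl
  | tail _ hzy ih =>
    obtain ⟨t, ht, rfl, hlt⟩ := hzy
    rcases ih with h | h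
    · exact .inl (h.tail ⟨t, ht, rfl, hlt⟩)
    · rcases cs.simple_mul_chainLE_or_of_isReflection ht hlt i with h' | h'
      · exact .inl (h.trans h')
      · exact .inr (h.trans h')

theorem chainLE_of_sublist {ω τ : List B} (hω : cs.IsReduced ω) (h : τ <+ ω) :
    cs.ChainLE (π τ) (π ω) := by
  induction ω generalizing τ with
  | nil =>
    rw [sublist_nil.mp h]
    exact .refl
  | cons i ω ih =>
    have hω' : cs.IsReduced ω := by simpa using hω.drop 1
    have hstep : cs.ChainLE (π ω) (π (i :: ω)) := by
      refine .single ⟨s i, cs.isReflection_simple i, wordProd_cons .., ?_⟩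
      rw [hω.eq, hω'.eq, length_cons]
      omega
    rcases sublist_cons_iff.mp h with hτ | ⟨τ, rfl, hτ⟩
    · exact (ih hω' hτ).trans hstep
    · rw [wordProd_cons]
      rcases cs.simple_mul_chainLE_or (ih hω' hτ) i with h' | h'
      · exact h'.trans hstep
      · rwa [wordProd_cons]

theorem bruhatLE_iff_chainLE {x y : W} : cs.bruhatLE x y ↔ cs.ChainLE x y := by
  constructor
  · rintro ⟨ω, hω, rfl, τ, hτ, -, rfl⟩
    exact cs.chainLE_of_sublist hω hτ
  · intro h
    obtain ⟨ω, hω, rfl⟩ := cs.exists_isReduced y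
    obtain ⟨τ, hτ, hτred, rfl⟩ := cs.exists_sublist_of_chainLE h hω rfl
    exact ⟨ω, hω, rfl, τ, hτ, hτred, rfl⟩

theorem bruhatLE_refl (x : W) : cs.bruhatLE x x :=
  (cs.bruhatLE_iff_chainLE).mpr .refl

theorem bruhatLE_trans {x y z : W} (hxy : cs.bruhatLE x y) (hyz : cs.bruhatLE y z) :
    cs.bruhatLE x z := by
  rw [bruhatLE_iff_chainLE] at *
  exact hxy.trans hyz

theorem length_le_of_bruhatLE {x y : W} (h : cs.bruhatLE x y) : ℓ x ≤ ℓ y := by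
  obtain ⟨ω, hω, rfl, τ, hτ, hτred, rfl⟩ := h
  rw [hω.eq, hτred.eq]
  exact hτ.length_le

theorem bruhatLE_simple_mul_of_not_isLeftDescent {x : W} {i : B}
    (h : ¬cs.IsLeftDescent x i) : cs.bruhatLE x (s i * x) := by
  obtain ⟨ω, hω, rfl⟩ := cs.exists_isReduced x
  exact ⟨i :: ω, hω.cons h, wordProd_cons .., ω, sublist_cons_self i ω, hω, rfl⟩

theorem simple_mul_bruhatLE_simple_mul {x y : W} {i : B} (h : cs.bruhatLE x y)
    (hx : ¬cs.IsLeftDescent x i) (hy : ¬cs.IsLeftDescent y i) :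
    cs.bruhatLE (s i * x) (s i * y) := by
  obtain ⟨ω, hω, rfl, τ, hτ, hτred, rfl⟩ := h
  exact ⟨i :: ω, hω.cons hy, wordProd_cons .., i :: τ, hτ.cons_cons i, hτred.cons hx,
    wordProd_cons ..⟩

theorem simple_mul_bruhatLE_simple_mul_iff {x y : W} {i : B} (hx : cs.IsLeftDescent x i)
    (hy : cs.IsLeftDescent y i) : cs.bruhatLE (s i * x) (s i * y) ↔ cs.bruhatLE x y := by
  constructor
  · intro h
    simpa only [simple_mul_simple_cancel_left] using cs.simple_mul_bruhatLE_simple_mul h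
      (cs.isLeftDescent_iff_not_isLeftDescent_mul.mp hx)
      (cs.isLeftDescent_iff_not_isLeftDescent_mul.mp hy)
  · intro h
    have hsx : cs.bruhatLE (s i * x) x := by
      simpa using cs.bruhatLE_simple_mul_of_not_isLeftDescent
        (cs.isLeftDescent_iff_not_isLeftDescent_mul.mp hx)
    obtain ⟨ρ, hρ, rfl⟩ := cs.exists_isReduced_cons_of_isLeftDescent hy
    have hρ' : cs.IsReduced ρ := by simpa using hρ.drop 1
    rw [wordProd_cons, simple_mul_simple_cancel_left]
    obtain ⟨τ, hτ, hτred, rfl⟩ :=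
      cs.exists_sublist_of_chainLE ((cs.bruhatLE_iff_chainLE).mp h) hρ rfl
    rcases sublist_cons_iff.mp hτ with hτ' | ⟨τ, rfl, hτ'⟩
    · exact cs.bruhatLE_trans hsx ⟨ρ, hρ', rfl, τ, hτ', hτred, rfl⟩
    · refine ⟨ρ, hρ', rfl, τ, hτ', by simpa using hτred.drop 1, ?_⟩
      rw [wordProd_cons, simple_mul_simple_cancel_left]

theorem bruhatLE_mul_left_of_length_add {u v g : W} (h : cs.bruhatLE u v)
    (hu : ℓ (g * u) + ℓ g = ℓ u) (hv : ℓ (g * v) + ℓ g = ℓ v) :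
    cs.bruhatLE (g * u) (g * v) := by
  obtain ⟨α, hα, rfl⟩ := cs.exists_isReduced g
  rw [hα.eq] at hu hv
  clear hα
  induction α generalizing u v with
  | nil => simpa using h
  | cons a α ih =>
    have key : ∀ w, ℓ (s a * (π α * w)) + (α.length + 1) = ℓ w →
        ℓ (π α * w) + α.length = ℓ w ∧ cs.IsLeftDescent (π α * w) a := by
      intro w hw
      have h₁ := cs.length_le_length_mul_add_left (π α) w
      have h₂ := cs.length_wordProd_le α
      have h₃ := cs.length_simple_mul (π α * w) a
      unfold IsLeftDescent
      omega
    simp only [wordProd_cons, mul_assoc, length_cons] at hu hv ⊢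
    obtain ⟨hu', hdu⟩ := key u hu
    obtain ⟨hv', hdv⟩ := key v hv
    exact (cs.simple_mul_bruhatLE_simple_mul_iff hdu hdv).mpr (ih h hu' hv')

theorem length_coe_simple_pos {B₂ : Type*} {M₂ : CoxeterMatrix B₂} {H : Subgroup W}
    (cs₂ : CoxeterSystem M₂ H) (i : B₂) : 0 < ℓ (cs₂.simple i : W) := by
  refine Nat.pos_of_ne_zero fun h ↦ ?_
  have : cs₂.simple i = 1 := Subtype.ext (cs.length_eq_zero_iff.mp h)
  simpa [this] using cs₂.length_simple i

end CoxeterSystem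

namespace IsQuasiSubsystem

variable {B₁ B₂ W₁ : Type*} [Group W₁] {M₁ : CoxeterMatrix B₁} {M₂ : CoxeterMatrix B₂}
  {cs₁ : CoxeterSystem M₁ W₁} {H : Subgroup W₁} {cs₂ : CoxeterSystem M₂ H}

theorem length_simple_mul_add_of_isLeftDescent (hq : IsQuasiSubsystem cs₁ cs₂) {x : H} {i : B₂}
    (hi : cs₂.IsLeftDescent x i) :
    cs₁.length ((cs₂.simple i * x : H) : W₁) + cs₁.length (cs₂.simple i : W₁) =
      cs₁.length (x : W₁) := by
  obtain ⟨ρ, hρ, rfl⟩ := cs₂.exists_isReduced_cons_of_isLeftDescent hi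
  have hρ' : cs₂.IsReduced ρ := by simpa using hρ.drop 1
  have he : cs₂.simple i * cs₂.wordProd (i :: ρ) = cs₂.wordProd ρ := by
    rw [CoxeterSystem.wordProd_cons, CoxeterSystem.simple_mul_simple_cancel_left]
  rw [he, hq _ hρ, hq _ hρ', List.map_cons, List.sum_cons, add_comm]

theorem length_simple_mul_of_not_isLeftDescent (hq : IsQuasiSubsystem cs₁ cs₂) {x : H} {i : B₂}
    (hi : ¬cs₂.IsLeftDescent x i) :
    cs₁.length ((cs₂.simple i * x : H) : W₁) =
      cs₁.length (x : W₁) + cs₁.length (cs₂.simple i : W₁) := by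
  have h := hq.length_simple_mul_add_of_isLeftDescent
    (cs₂.isLeftDescent_iff_not_isLeftDescent_mul.mpr (by rwa [cs₂.simple_mul_simple_cancel_left]))
  rwa [cs₂.simple_mul_simple_cancel_left, eq_comm] at h

end IsQuasiSubsystem

theorem quasiSubsystem_bruhatLE_reverse_general {B₁ B₂ W₁ : Type*} [Group W₁]
    {M₁ : CoxeterMatrix B₁} {M₂ : CoxeterMatrix B₂}
    (cs₁ : CoxeterSystem M₁ W₁) {H : Subgroup W₁} (cs₂ : CoxeterSystem M₂ H)
    (hq : IsQuasiSubsystem cs₁ cs₂)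
    (hC : ∀ (x y : H) (i : B₂), cs₁.bruhatLE (x : W₁) (y : W₁) →
      cs₁.length ((cs₂.simple i * y : H) : W₁) < cs₁.length (y : W₁) →
      cs₁.length (x : W₁) < cs₁.length ((cs₂.simple i * x : H) : W₁) →
      cs₁.bruhatLE ((cs₂.simple i * x : H) : W₁) (y : W₁))
    (x y : H) (hxy : cs₁.bruhatLE (x : W₁) (y : W₁)) : cs₂.bruhatLE x y := by
  induction hn : 2 * cs₁.length (y : W₁) - cs₁.length (x : W₁) using Nat.strong_induction_on
    generalizing x y with
  | _ n ih =>
  subst hn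
  have hle := cs₁.length_le_of_bruhatLE hxy
  by_cases hy : y = 1
  · subst hy
    obtain rfl : x = 1 := Subtype.ext (cs₁.length_eq_zero_iff.mp (by simpa using hle))
    exact cs₂.bruhatLE_refl 1
  obtain ⟨i, hi⟩ := cs₂.exists_leftDescent_of_ne_one hy
  have hyi := hq.length_simple_mul_add_of_isLeftDescent hi
  have hs := cs₁.length_coe_simple_pos cs₂ i
  by_cases hx : cs₂.IsLeftDescent x i
  · have hxi := hq.length_simple_mul_add_of_isLeftDescent hx
    have h₁ := cs₁.bruhatLE_mul_left_of_length_add hxy hxi hyi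
    exact (cs₂.simple_mul_bruhatLE_simple_mul_iff hx hi).mp (ih _ (by omega) _ _ h₁ rfl)
  · have hxi := hq.length_simple_mul_of_not_isLeftDescent hx
    have h₁ := hC x y i hxy (by omega) (by omega)
    have h₂ := ih _ (by have := cs₁.length_le_of_bruhatLE h₁; omega) _ _ h₁ rfl
    exact cs₂.bruhatLE_trans (cs₂.bruhatLE_simple_mul_of_not_isLeftDescent hx) h₂

/-- If `(W₂,S₂)` is a quasi subsystem of `(W₁,S₁)` satisfying condition (C), then
`x ≤₁ y` implies `x ≤₂ y` for all `x, y ∈ W₂`. -/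
theorem quasiSubsystem_bruhatLE_reverse {B₁ B₂ W₁ : Type*} [Group W₁] [Finite W₁]
    {M₁ : CoxeterMatrix B₁} {M₂ : CoxeterMatrix B₂}
    (cs₁ : CoxeterSystem M₁ W₁) {H : Subgroup W₁} (cs₂ : CoxeterSystem M₂ H)
    (hq : IsQuasiSubsystem cs₁ cs₂)
    (hC : ∀ (x y : H) (i : B₂), cs₁.bruhatLE (x : W₁) (y : W₁) →
      cs₁.length ((cs₂.simple i * y : H) : W₁) < cs₁.length (y : W₁) →
      cs₁.length (x : W₁) < cs₁.length ((cs₂.simple i * x : H) : W₁) →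
      cs₁.bruhatLE ((cs₂.simple i * x : H) : W₁) (y : W₁))
    (x y : H) (hxy : cs₁.bruhatLE (x : W₁) (y : W₁)) : cs₂.bruhatLE x y :=
  quasiSubsystem_bruhatLE_reverse_general cs₁ cs₂ hq hC x y hxy
end

section
/- Let λ ∈ V_ℂ be regular with ⟨λ,α∨⟩ = 1 for every α ∈ Θ, and let w ∈ W_λ be such that wλ is dominant. Then wΘ ⊆ Π_λ. -/
open Pointwise
open scoped RealInnerProductSpace

noncomputable section

variable {V : Type*} [NormedAddCommGroup V] [InnerProductSpace ℝ V] [FiniteDimensional ℝ V]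

/-- The coroot `α∨ = 2α/⟨α,α⟩`. -/
def coroot (α : V) : V := (2 / ⟪α, α⟫) • α

/-- The reflection `s_α` in the root `α`, as a linear automorphism of `V`
(the orthogonal reflection fixing the hyperplane orthogonal to `α`). -/
def rootRefl (α : V) : V ≃ₗ[ℝ] V :=
  (Submodule.reflection (Submodule.span ℝ {α})ᗮ).toLinearEquiv

/-- `w` is the longest element of the subgroup `H` with respect to a positive system `P`:
it lies in `H` and maps `P` onto `-P`. -/
def IsLongest (H : Subgroup (V ≃ₗ[ℝ] V)) (P : Set V) (w : V ≃ₗ[ℝ] V) : Prop :=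
  w ∈ H ∧ ⇑w '' P = (fun x => -x) '' P

open Classical in
/-- The longest element of `H` with respect to `P` (junk value `1` if there is none). -/
def longest (H : Subgroup (V ≃ₗ[ℝ] V)) (P : Set V) : V ≃ₗ[ℝ] V :=
  if h : ∃ w, IsLongest H P w then h.choose else 1

/-- The parabolic subgroup `W_Θ` generated by the reflections `s_α`, `α ∈ Θ`. -/
def parabolicSub (Θ : Set V) : Subgroup (V ≃ₗ[ℝ] V) :=
  Subgroup.closure {g | ∃ α ∈ Θ, g = rootRefl α}

/-- `a*_Θ`, the orthogonal complement of the span of `Θ`. -/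
def aTheta (Θ : Set V) : Submodule ℝ V := (Submodule.span ℝ Θ)ᗮ

/-- The orthogonal projection onto `a*_Θ`; `resTheta Θ α` is `α|_{a_Θ}`. -/
def resTheta (Θ : Set V) (v : V) : V := (Submodule.orthogonalProjectionOnto (aTheta Θ) v : V)

/-- The set of indecomposable elements of `P`: the base of a positive system `P`. -/
def baseOf (P : Set V) : Set V := {β ∈ P | ¬ ∃ γ ∈ P, ∃ δ ∈ P, β = γ + δ}

/-- Data of a root system with a chosen positive system `Δ⁺` and base `Π`. -/
structure RootData (V : Type*) [NormedAddCommGroup V] [InnerProductSpace ℝ V] where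
  roots : Set V
  pos : Set V
  base : Set V

namespace RootData

variable (R : RootData V)

/-- The axioms: `Δ` is a finite reduced crystallographic root system spanning `V`,
`Δ⁺` is a positive system with base `Π`. -/
structure IsRootSystem : Prop where
  finite : R.roots.Finite
  span_eq_top : Submodule.span ℝ R.roots = ⊤
  zero_not_mem : (0 : V) ∉ R.roots
  reduced : ∀ α ∈ R.roots, ∀ t : ℝ, t • α ∈ R.roots → t = 1 ∨ t = -1
  reflect_mem : ∀ α ∈ R.roots, ∀ β ∈ R.roots, rootRefl α β ∈ R.roots
  crystallographic : ∀ α ∈ R.roots, ∀ β ∈ R.roots, ∃ z : ℤ, (z : ℝ) = ⟪β, coroot α⟫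
  pos_subset : R.pos ⊆ R.roots
  pos_iff_neg_not_mem : ∀ α ∈ R.roots, (α ∈ R.pos ↔ -α ∉ R.pos)
  base_subset : R.base ⊆ R.pos
  base_indep : LinearIndependent ℝ ((↑) : R.base → V)
  pos_mem_closure : ∀ β ∈ R.pos, β ∈ AddSubmonoid.closure R.base

/-- The Weyl group of `Δ`, generated by the reflections in the roots. -/
def weylGroup : Subgroup (V ≃ₗ[ℝ] V) :=
  Subgroup.closure {g | ∃ α ∈ R.roots, g = rootRefl α}

/-- The set `S` of simple reflections `s_α`, `α ∈ Π`. -/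
def simpleRefls : Set (V ≃ₗ[ℝ] V) := {g | ∃ α ∈ R.base, g = rootRefl α}

/-- `ρ`, half the sum of the positive roots. -/
def rho : V := (2 : ℝ)⁻¹ • ∑ᶠ α ∈ R.pos, α

/-- `w_Θ`, the longest element of `W_Θ`. -/
def wTheta (Θ : Set V) : V ≃ₗ[ℝ] V :=
  longest (parabolicSub Θ) (R.pos ∩ (Submodule.span ℝ Θ : Set V))

/-- `ρ_Θ = (1/2)(ρ - w_Θ ρ)`. -/
def rhoTheta (Θ : Set V) : V := (2 : ℝ)⁻¹ • (R.rho - R.wTheta Θ R.rho)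

/-- `Σ_Θ = {α|_{a_Θ} : α ∈ Δ} ∖ {0}`. -/
def SigmaTheta (Θ : Set V) : Set V := (resTheta Θ '' R.roots) \ {0}

/-- `Σ_Θ⁺ = {α|_{a_Θ} : α ∈ Δ⁺} ∖ {0}`. -/
def SigmaThetaPos (Θ : Set V) : Set V := (resTheta Θ '' R.pos) \ {0}

/-- `W(Θ) = {w ∈ W : wΘ = Θ}`. -/
def Wset (Θ : Set V) : Set (V ≃ₗ[ℝ] V) := {w | w ∈ R.weylGroup ∧ ⇑w '' Θ = Θ}

/-- `Δ(α)`: the roots whose restriction to `a_Θ` is a real multiple of that of `α`. -/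
def rootsAlong (Θ : Set V) (α : V) : Set V :=
  {β ∈ R.roots | ∃ c : ℝ, resTheta Θ β = c • resTheta Θ α}

/-- `Δ⁺(α) = Δ(α) ∩ Δ⁺`. -/
def posAlong (Θ : Set V) (α : V) : Set V := R.rootsAlong Θ α ∩ R.pos

/-- `W_Θ(α)`, the Weyl group of `Δ(α)`. -/
def weylAlong (Θ : Set V) (α : V) : Subgroup (V ≃ₗ[ℝ] V) :=
  Subgroup.closure {g | ∃ β ∈ R.rootsAlong Θ α, g = rootRefl β}

/-- `σ_α = w^α w_Θ`, where `w^α` is the longest element of `W_Θ(α)`. -/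
def sigmaRefl (Θ : Set V) (α : V) : V ≃ₗ[ℝ] V :=
  longest (R.weylAlong Θ α) (R.posAlong Θ α) * R.wTheta Θ

/-- `α` is `Θ`-useful if `σ_α` has order two. -/
def IsUseful (Θ : Set V) (α : V) : Prop := orderOf (R.sigmaRefl Θ α) = 2

/-- `α` is `Θ`-reduced if `α|_{a_Θ} ≠ 0` and `α = α̃`, i.e. `α` belongs to the base `Π(α)`
of `Δ⁺(α)`. -/
def IsReducedRoot (Θ : Set V) (α : V) : Prop :=
  resTheta Θ α ≠ 0 ∧ α ∈ baseOf (R.posAlong Θ α)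

/-- `ʳᵘΔ_Θ⁺`, the set of `Θ`-reduced `Θ`-useful positive roots. -/
def ruPos (Θ : Set V) : Set V :=
  {α ∈ R.pos | R.IsReducedRoot Θ α ∧ R.IsUseful Θ α}

/-- `W(Θ)′`, the subgroup generated by the `σ_α` for `α ∈ ʳᵘΔ_Θ⁺`. -/
def WThetaPrime (Θ : Set V) : Subgroup (V ≃ₗ[ℝ] V) :=
  Subgroup.closure {g | ∃ α ∈ R.ruPos Θ, g = R.sigmaRefl Θ α}

/-- `ʳᵘΣ_Θ⁺ = {α|_{a_Θ} : α ∈ ʳᵘΔ_Θ⁺}`. -/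
def ruSigmaPos (Θ : Set V) : Set V := resTheta Θ '' R.ruPos Θ

/-- `ʳᵘΣ_Θ = ʳᵘΣ_Θ⁺ ∪ (−ʳᵘΣ_Θ⁺)`. -/
def ruSigma (Θ : Set V) : Set V := R.ruSigmaPos Θ ∪ (fun x => -x) '' R.ruSigmaPos Θ

/-- `ᵘΣ_Θ`, the set of restrictions of the `Θ`-useful roots. -/
def uSigma (Θ : Set V) : Set V := resTheta Θ '' {α ∈ R.roots | R.IsUseful Θ α}

/-- `ᵘΠ_Θ`, the base of `ʳᵘΣ_Θ⁺`. -/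
def uPi (Θ : Set V) : Set V := baseOf (R.ruSigmaPos Θ)

/-- `S(Θ) = {σ_γ : γ ∈ ᵘΠ_Θ}`. -/
def SThetaSet (Θ : Set V) : Set (V ≃ₗ[ℝ] V) :=
  {g | ∃ α ∈ R.ruPos Θ, resTheta Θ α ∈ R.uPi Θ ∧ g = R.sigmaRefl Θ α}

/-- `K(Θ) = {w ∈ W : wΘ ⊆ Π}`. -/
def Kset (Θ : Set V) : Set (V ≃ₗ[ℝ] V) := {w | w ∈ R.weylGroup ∧ ⇑w '' Θ ⊆ R.base}

/-- `Θ` is normal if every simple root outside `Θ` is `Θ`-useful. -/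
def IsNormal (Θ : Set V) : Prop := ∀ α ∈ R.base \ Θ, R.IsUseful Θ α

/-- `Θ` is seminormal. -/
def IsSeminormal (Θ : Set V) : Prop :=
  ∃ Ψ : Set V, Θ ⊆ Ψ ∧ Ψ ⊆ R.base ∧ R.uPi Θ = resTheta Θ '' (Ψ \ Θ)

/-- `ξ` is integral: `⟨ξ,α∨⟩ ∈ ℤ` for all roots `α`. -/
def IsIntegral (ξ : V) : Prop := ∀ α ∈ R.roots, ∃ z : ℤ, ⟪ξ, coroot α⟫ = (z : ℝ)

/-- `ξ` is regular: `⟨ξ,α⟩ ≠ 0` for all roots `α`. -/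
def IsRegular (ξ : V) : Prop := ∀ α ∈ R.roots, ⟪ξ, α⟫ ≠ 0

/-- `ξ` is dominant: `⟨ξ,α∨⟩ ≥ 0` for all positive roots `α`. -/
def IsDominant (ξ : V) : Prop := ∀ α ∈ R.pos, 0 ≤ ⟪ξ, coroot α⟫

end RootData

/-- The length of `w` with respect to a generating set `S`. -/
def lengthWrt {G : Type*} [Group G] (S : Set G) (w : G) : ℕ :=
  sInf {k | ∃ l : List G, (∀ s ∈ l, s ∈ S) ∧ l.prod = w ∧ l.length = k}

/-- A reduced word with letters in `S`. -/
def IsReducedWordWrt {G : Type*} [Group G] (S : Set G) (l : List G) : Prop :=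
  (∀ s ∈ l, s ∈ S) ∧ lengthWrt S l.prod = l.length

/-- The Bruhat order with respect to `S`: `x ≤ y` iff some reduced word for `y` contains
a subword which is a reduced word for `x`. -/
def bruhatLEWrt {G : Type*} [Group G] (S : Set G) (x y : G) : Prop :=
  ∃ l : List G, IsReducedWordWrt S l ∧ l.prod = y ∧
    ∃ l' : List G, l'.Sublist l ∧ IsReducedWordWrt S l' ∧ l'.prod = x

/-- `(W₂,S₂)` is a quasi subsystem of `(W₁,S₁)`: `W₂` is a subgroup of `W₁`, and for every
reduced expression `w = s₁ ⋯ s_k` in `(W₂,S₂)` one has `ℓ₁(w) = ℓ₁(s₁) + ⋯ + ℓ₁(s_k)`. -/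
def IsQuasiSubsystemWrt {G : Type*} [Group G] (W₁ W₂ : Subgroup G) (S₁ S₂ : Set G) : Prop :=
  W₂ ≤ W₁ ∧ ∀ l : List G, (∀ s ∈ l, s ∈ S₂) → lengthWrt S₂ l.prod = l.length →
    lengthWrt S₁ l.prod = (l.map (lengthWrt S₁)).sum


/-- The pairing `⟨λ,α⟩ ∈ ℂ` of an element `λ` of the complexification `V_ℂ`
(encoded as a pair (real part, imaginary part)) with a vector `α ∈ V`. -/
def cInner (lam : V × V) (α : V) : ℂ := (⟪lam.1, α⟫ : ℂ) + (⟪lam.2, α⟫ : ℂ) * Complex.I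

namespace RootData

variable (R : RootData V)

/-- `λ ∈ V_ℂ` is regular: `⟨λ,α⟩ ≠ 0` for all roots `α`. -/
def CIsRegular (lam : V × V) : Prop := ∀ α ∈ R.roots, cInner lam α ≠ 0

/-- `λ ∈ V_ℂ` is dominant: `⟨λ,α∨⟩` is not a negative integer for any positive root `α`. -/
def CIsDominant (lam : V × V) : Prop :=
  ∀ α ∈ R.pos, ¬ ∃ n : ℤ, n < 0 ∧ cInner lam (coroot α) = (n : ℂ)

/-- The set `Δ_λ` of integral roots for `λ ∈ V_ℂ`. -/
def cIntegralRoots (lam : V × V) : Set V :=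
  {α ∈ R.roots | ∃ z : ℤ, cInner lam (coroot α) = (z : ℂ)}

/-- The base `Π_λ` of the positive system `Δ⁺ ∩ Δ_λ` of `Δ_λ`. -/
def cPiLam (lam : V × V) : Set V := baseOf (R.pos ∩ R.cIntegralRoots lam)

/-- The integral Weyl group `W_λ = {w ∈ W : wλ − λ ∈ ℤΔ}` for `λ ∈ V_ℂ`. -/
def cWLam (lam : V × V) : Set (V ≃ₗ[ℝ] V) :=
  {w | w ∈ R.weylGroup ∧ w lam.1 - lam.1 ∈ Submodule.span ℤ R.roots ∧ w lam.2 = lam.2}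

end RootData

/-!
Put `μ = wλ`. Since `w ∈ W_λ`, the roots integral for `μ` are those integral for `λ`, `μ` is
regular and dominant, and `⟨μ, (wθ)∨⟩ = 1` for `θ ∈ Θ`. So it suffices that a root `α` with
`⟨μ, α∨⟩ = 1` is simple in `Δ_μ⁺`. It is positive by dominance. If `α = γ + δ` with
`γ, δ ∈ Δ_μ⁺`, then `⟨μ, γ∨⟩ = m` and `⟨μ, δ∨⟩ = n` are positive integers, and pairing
`α = γ + δ` with `μ` gives `|α|² = m|γ|² + n|δ|²`. Hence `⟨γ, δ⟩ ≥ 0`, which with integrality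
forces `⟨γ, α∨⟩ = ⟨δ, α∨⟩ = 1`. Then `⟨μ, (s_γ α)∨⟩ = 1 - m`, so regularity gives `m ≥ 2`, and
likewise `n ≥ 2`. Now `|γ + δ|² ≥ 2|γ|² + 2|δ|²` and the parallelogram law give `γ = δ`, so
`2γ` is a root, contradicting reducedness.
-/

section

omit [FiniteDimensional ℝ V]

lemma inner_coroot (x α : V) : ⟪x, coroot α⟫ = 2 * ⟪x, α⟫ / ⟪α, α⟫ := by
  rw [coroot, real_inner_smul_right]
  ring

lemma inner_self_coroot {α : V} (hα : α ≠ 0) : ⟪α, coroot α⟫ = 2 := by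
  rw [inner_coroot, mul_div_assoc, div_self (inner_self_ne_zero.mpr hα), mul_one]

lemma coroot_neg (α : V) : coroot (-α) = -coroot α := by
  simp [coroot]

lemma rootRefl_apply (α x : V) : rootRefl α x = x - ⟪x, coroot α⟫ • α := by
  change (Submodule.reflection (Submodule.span ℝ ({α} : Set V))ᗮ) x = _
  rw [Submodule.reflection_apply, Submodule.starProjection_orthogonal_val,
    Submodule.starProjection_singleton, inner_coroot, ← real_inner_self_eq_norm_sq,
    real_inner_comm]
  simp only [RCLike.ofReal_real_eq_id, id_eq]
  match_scalars <;> ring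

lemma rootRefl_rootRefl (α x : V) : rootRefl α (rootRefl α x) = x :=
  Submodule.reflection_reflection _ x

lemma inner_rootRefl_rootRefl (α x y : V) : ⟪rootRefl α x, rootRefl α y⟫ = ⟪x, y⟫ :=
  (Submodule.reflection (Submodule.span ℝ ({α} : Set V))ᗮ).inner_map_map x y

lemma coroot_rootRefl (γ α : V) :
    coroot (rootRefl γ α) = coroot α - ⟪γ, coroot α⟫ • coroot γ := by
  rw [coroot, inner_rootRefl_rootRefl, rootRefl_apply]
  simp only [coroot, real_inner_smul_right, smul_sub, smul_smul, real_inner_comm α γ]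
  congr 2
  ring

lemma coroot_map {w : V ≃ₗ[ℝ] V} (hw : ∀ x y, ⟪w x, w y⟫ = ⟪x, y⟫) (α : V) :
    coroot (w α) = w (coroot α) := by
  rw [coroot, coroot, hw, map_smul]

lemma cInner_add (μ : V × V) (x y : V) : cInner μ (x + y) = cInner μ x + cInner μ y := by
  simp only [cInner, inner_add_right]
  push_cast
  ring

lemma cInner_smul (μ : V × V) (r : ℝ) (x : V) : cInner μ (r • x) = r * cInner μ x := by
  simp only [cInner, real_inner_smul_right]
  push_cast
  ring

lemma cInner_neg (μ : V × V) (x : V) : cInner μ (-x) = -cInner μ x := by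
  simpa using cInner_smul μ (-1) x

lemma cInner_sub (μ : V × V) (x y : V) : cInner μ (x - y) = cInner μ x - cInner μ y := by
  rw [sub_eq_add_neg, cInner_add, cInner_neg, sub_eq_add_neg]

lemma cInner_coroot (μ : V × V) (α : V) :
    cInner μ (coroot α) = (2 / ⟪α, α⟫ : ℝ) * cInner μ α :=
  cInner_smul μ _ α

lemma cInner_eq_of_cInner_coroot_eq {μ : V × V} {α : V} (hα : α ≠ 0) {c : ℂ}
    (h : cInner μ (coroot α) = c) : cInner μ α = c * (⟪α, α⟫ : ℝ) / 2 := by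
  have hα' : ((⟪α, α⟫ : ℝ) : ℂ) ≠ 0 := by exact_mod_cast inner_self_ne_zero.mpr hα
  rw [cInner_coroot] at h
  push_cast at h
  field_simp at h ⊢
  linear_combination h

lemma cInner_coroot_rootRefl (μ : V × V) (γ α : V) :
    cInner μ (coroot (rootRefl γ α)) =
      cInner μ (coroot α) - ⟪γ, coroot α⟫ * cInner μ (coroot γ) := by
  rw [coroot_rootRefl, cInner_sub, cInner_smul]

lemma cInner_map {w : V ≃ₗ[ℝ] V} (hw : ∀ x y, ⟪w x, w y⟫ = ⟪x, y⟫) (lam : V × V) (v : V) :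
    cInner (w lam.1, w lam.2) (w v) = cInner lam v := by
  simp only [cInner, hw]

namespace RootData

variable {R : RootData V}

lemma inner_map_map_of_mem_weylGroup {w : V ≃ₗ[ℝ] V} (hw : w ∈ R.weylGroup) (x y : V) :
    ⟪w x, w y⟫ = ⟪x, y⟫ := by
  induction hw using Subgroup.closure_induction generalizing x y with
  | mem g hg =>
    obtain ⟨α, -, rfl⟩ := hg
    exact inner_rootRefl_rootRefl α x y
  | one => rfl
  | mul g h _ _ hg hh => exact (hg (h x) (h y)).trans (hh x y)
  | inv g _ hg => simpa using (hg (g⁻¹ x) (g⁻¹ y)).symm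

lemma map_mem_roots_iff (hR : R.IsRootSystem) {w : V ≃ₗ[ℝ] V} (hw : w ∈ R.weylGroup)
    {β : V} : w β ∈ R.roots ↔ β ∈ R.roots := by
  induction hw using Subgroup.closure_induction generalizing β with
  | mem g hg =>
    obtain ⟨α, hα, rfl⟩ := hg
    refine ⟨fun h => ?_, hR.reflect_mem α hα β⟩
    simpa only [rootRefl_rootRefl] using hR.reflect_mem α hα _ h
  | one => rfl
  | mul g h _ _ hg hh => exact hg.trans hh
  | inv g _ hg => simpa using (hg (β := g⁻¹ β)).symm

lemma IsRootSystem.ne_zero (hR : R.IsRootSystem) {α : V} (hα : α ∈ R.roots) : α ≠ 0 :=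
  fun h => hR.zero_not_mem (h ▸ hα)

lemma exists_int_inner_coroot_of_mem_span (hR : R.IsRootSystem) {v : V}
    (hv : v ∈ Submodule.span ℤ R.roots) {β : V} (hβ : β ∈ R.roots) :
    ∃ z : ℤ, ⟪v, coroot β⟫ = z := by
  induction hv using Submodule.span_induction with
  | mem x hx =>
    obtain ⟨z, hz⟩ := hR.crystallographic β hβ x hx
    exact ⟨z, hz.symm⟩
  | zero => exact ⟨0, by simp⟩
  | add x y _ _ hx hy =>
    obtain ⟨a, ha⟩ := hx
    obtain ⟨b, hb⟩ := hy
    exact ⟨a + b, by rw [inner_add_left, ha, hb]; push_cast; ring⟩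
  | smul n x _ hx =>
    obtain ⟨a, ha⟩ := hx
    exact ⟨n * a, by rw [← Int.cast_smul_eq_zsmul ℝ, real_inner_smul_left, ha]; push_cast; ring⟩

lemma cIntegralRoots_eq_of_mem_cWLam (hR : R.IsRootSystem) {lam : V × V} {w : V ≃ₗ[ℝ] V}
    (hw : w ∈ R.cWLam lam) : R.cIntegralRoots (w lam.1, w lam.2) = R.cIntegralRoots lam := by
  obtain ⟨-, hv, himag⟩ := hw
  ext β
  refine and_congr_right fun hβ => ?_
  obtain ⟨z, hz⟩ := exists_int_inner_coroot_of_mem_span hR hv hβ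
  have hshift : cInner (w lam.1, w lam.2) (coroot β) = cInner lam (coroot β) + z := by
    rw [inner_sub_left, sub_eq_iff_eq_add'] at hz
    simp only [cInner, himag, hz]
    push_cast
    ring
  rw [hshift]
  constructor
  · rintro ⟨y, hy⟩
    exact ⟨y - z, by push_cast; linear_combination hy⟩
  · rintro ⟨y, hy⟩
    exact ⟨y + z, by rw [hy]; push_cast; ring⟩

lemma CIsRegular.map (hR : R.IsRootSystem) {w : V ≃ₗ[ℝ] V} (hw : w ∈ R.weylGroup)
    {lam : V × V} (hreg : R.CIsRegular lam) : R.CIsRegular (w lam.1, w lam.2) := by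
  intro β hβ
  rw [← w.apply_symm_apply β] at hβ ⊢
  rw [cInner_map (inner_map_map_of_mem_weylGroup hw)]
  exact hreg _ ((map_mem_roots_iff hR hw).mp hβ)

lemma CIsRegular.cInner_coroot_ne_zero (hR : R.IsRootSystem) {μ : V × V}
    (hreg : R.CIsRegular μ) {β : V} (hβ : β ∈ R.roots) : cInner μ (coroot β) ≠ 0 := by
  have hβ' : ⟪β, β⟫ ≠ 0 := inner_self_ne_zero.mpr (hR.ne_zero hβ)
  rw [cInner_coroot]
  exact mul_ne_zero (by exact_mod_cast div_ne_zero two_ne_zero hβ') (hreg β hβ)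

lemma mem_pos_of_cInner_coroot_eq_one (hR : R.IsRootSystem) {μ : V × V}
    (hdom : R.CIsDominant μ) {α : V} (hα : α ∈ R.roots) (h1 : cInner μ (coroot α) = 1) :
    α ∈ R.pos := by
  by_contra h
  have hneg : -α ∈ R.pos := by_contra fun hn => h ((hR.pos_iff_neg_not_mem α hα).mpr hn)
  exact hdom (-α) hneg ⟨-1, by norm_num, by rw [coroot_neg, cInner_neg, h1]; norm_num⟩

lemma exists_pos_int_cInner_coroot (hR : R.IsRootSystem) {μ : V × V}
    (hreg : R.CIsRegular μ) (hdom : R.CIsDominant μ) {β : V}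
    (hβ : β ∈ R.pos ∩ R.cIntegralRoots μ) : ∃ m : ℤ, 0 < m ∧ cInner μ (coroot β) = m := by
  obtain ⟨hβpos, -, m, hm⟩ := hβ
  refine ⟨m, ?_, hm⟩
  have hm0 : m ≠ 0 := by
    rintro rfl
    exact hreg.cInner_coroot_ne_zero hR (hR.pos_subset hβpos) (by simpa using hm)
  have hm_nonneg : ¬ m < 0 := fun hneg => hdom β hβpos ⟨m, hneg, hm⟩
  omega

lemma inner_coroot_add_eq_one (hR : R.IsRootSystem) {γ δ : V} (hγ : γ ∈ R.roots)
    (hδ : δ ∈ R.roots) (hγδ : γ + δ ∈ R.roots) (h : 0 ≤ ⟪γ, δ⟫) :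
    ⟪γ, coroot (γ + δ)⟫ = 1 := by
  obtain ⟨a, ha⟩ := hR.crystallographic _ hγδ γ hγ
  obtain ⟨b, hb⟩ := hR.crystallographic _ hγδ δ hδ
  have hsum : (a : ℝ) + b = 2 := by
    rw [ha, hb, ← inner_add_left, inner_self_coroot (hR.ne_zero hγδ)]
  have hpos : ∀ x, 0 < ⟪x, γ + δ⟫ → 0 < ⟪x, coroot (γ + δ)⟫ := fun x hx => by
    have := real_inner_self_pos.mpr (hR.ne_zero hγδ)
    rw [inner_coroot]
    positivity
  have ha0 : (0 : ℝ) < a := ha ▸ hpos γ (by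
    rw [inner_add_right]
    linarith [real_inner_self_pos.mpr (hR.ne_zero hγ)])
  have hb0 : (0 : ℝ) < b := hb ▸ hpos δ (by
    rw [inner_add_right, real_inner_comm]
    linarith [real_inner_self_pos.mpr (hR.ne_zero hδ)])
  have ha1 : a = 1 := by
    have : a + b = 2 := by exact_mod_cast hsum
    have : 0 < a := by exact_mod_cast ha0
    have : 0 < b := by exact_mod_cast hb0
    omega
  rw [← ha, ha1, Int.cast_one]

lemma cInner_coroot_ne_one_of_inner_coroot_eq_one (hR : R.IsRootSystem) {μ : V × V}
    (hreg : R.CIsRegular μ) {γ α : V} (hγ : γ ∈ R.roots) (hα : α ∈ R.roots)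
    (ha : ⟪γ, coroot α⟫ = 1) (h1 : cInner μ (coroot α) = 1) : cInner μ (coroot γ) ≠ 1 := by
  intro hγ1
  apply hreg.cInner_coroot_ne_zero hR (hR.reflect_mem γ hγ α hα)
  rw [cInner_coroot_rootRefl, h1, ha, hγ1]
  norm_num

lemma cInner_coroot_add_ne_one (hR : R.IsRootSystem) {μ : V × V} (hreg : R.CIsRegular μ)
    {γ δ : V} (hγ : γ ∈ R.roots) (hδ : δ ∈ R.roots) (hγδ : γ + δ ∈ R.roots) {m n : ℤ}
    (hm : 0 < m) (hn : 0 < n) (hγm : cInner μ (coroot γ) = m)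
    (hδn : cInner μ (coroot δ) = n) : cInner μ (coroot (γ + δ)) ≠ 1 := by
  intro h1
  have hnorm : ⟪γ + δ, γ + δ⟫ = m * ⟪γ, γ⟫ + n * ⟪δ, δ⟫ := by
    have h := cInner_add μ γ δ
    rw [cInner_eq_of_cInner_coroot_eq (hR.ne_zero hγδ) h1,
      cInner_eq_of_cInner_coroot_eq (hR.ne_zero hγ) hγm,
      cInner_eq_of_cInner_coroot_eq (hR.ne_zero hδ) hδn] at h
    exact_mod_cast (by push_cast; linear_combination 2 * h :
      ((⟪γ + δ, γ + δ⟫ : ℝ) : ℂ) = ((m * ⟪γ, γ⟫ + n * ⟪δ, δ⟫ : ℝ) : ℂ))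
  have hmR : (1 : ℝ) ≤ m := by exact_mod_cast hm
  have hnR : (1 : ℝ) ≤ n := by exact_mod_cast hn
  have hγγ := real_inner_self_nonneg (x := γ)
  have hδδ := real_inner_self_nonneg (x := δ)
  have hγδ_nonneg : 0 ≤ ⟪γ, δ⟫ := by
    rw [real_inner_add_add_self] at hnorm
    nlinarith
  have hm2 : 2 ≤ m := by
    have := cInner_coroot_ne_one_of_inner_coroot_eq_one hR hreg hγ hγδ
      (inner_coroot_add_eq_one hR hγ hδ hγδ hγδ_nonneg) h1
    rw [hγm] at this
    have : m ≠ 1 := by rintro rfl; simp at this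
    omega
  have hn2 : 2 ≤ n := by
    have hδγ : δ + γ ∈ R.roots := add_comm γ δ ▸ hγδ
    have := cInner_coroot_ne_one_of_inner_coroot_eq_one hR hreg hδ hγδ
      (add_comm δ γ ▸ inner_coroot_add_eq_one hR hδ hγ hδγ (real_inner_comm γ δ ▸ hγδ_nonneg)) h1
    rw [hδn] at this
    have : n ≠ 1 := by rintro rfl; simp at this
    omega
  have hγ_eq_δ : γ = δ := by
    have hpar : ⟪γ - δ, γ - δ⟫ = 2 * ⟪γ, γ⟫ + 2 * ⟪δ, δ⟫ - ⟪γ + δ, γ + δ⟫ := by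
      rw [real_inner_sub_sub_self, real_inner_add_add_self]
      ring
    have hm2R : (2 : ℝ) ≤ m := by exact_mod_cast hm2
    have hn2R : (2 : ℝ) ≤ n := by exact_mod_cast hn2
    have : ⟪γ - δ, γ - δ⟫ ≤ 0 := by nlinarith
    exact sub_eq_zero.mp (real_inner_self_nonpos.mp this)
  subst hγ_eq_δ
  rw [← two_smul ℝ] at hγδ
  rcases hR.reduced γ hγ 2 hγδ with h | h <;> norm_num at h

lemma mem_cPiLam_of_cInner_coroot_eq_one (hR : R.IsRootSystem) {μ : V × V}
    (hreg : R.CIsRegular μ) (hdom : R.CIsDominant μ) {α : V} (hα : α ∈ R.roots)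
    (h1 : cInner μ (coroot α) = 1) : α ∈ R.cPiLam μ := by
  refine ⟨⟨mem_pos_of_cInner_coroot_eq_one hR hdom hα h1, hα, 1, by rw [h1, Int.cast_one]⟩, ?_⟩
  rintro ⟨γ, hγ, δ, hδ, rfl⟩
  obtain ⟨m, hm, hγm⟩ := exists_pos_int_cInner_coroot hR hreg hdom hγ
  obtain ⟨n, hn, hδn⟩ := exists_pos_int_cInner_coroot hR hreg hdom hδ
  exact cInner_coroot_add_ne_one hR hreg (hR.pos_subset hγ.1) (hR.pos_subset hδ.1) hα hm hn
    hγm hδn h1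

end RootData

end

theorem image_theta_subset_cPiLam_general (R : RootData V) (hR : R.IsRootSystem)
    (Θ : Set V) (hΘ : Θ ⊆ R.base)
    (lam : V × V) (hreg : R.CIsRegular lam)
    (hone : ∀ α ∈ Θ, cInner lam (coroot α) = 1)
    (w : V ≃ₗ[ℝ] V) (hw : w ∈ R.cWLam lam)
    (hdom : R.CIsDominant (w lam.1, w lam.2)) :
    ⇑w '' Θ ⊆ R.cPiLam lam := by
  rintro _ ⟨θ, hθ, rfl⟩
  have hwW : w ∈ R.weylGroup := hw.1
  have hiso := RootData.inner_map_map_of_mem_weylGroup hwW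
  have hθ_root : θ ∈ R.roots := hR.pos_subset (hR.base_subset (hΘ hθ))
  have h1 : cInner (w lam.1, w lam.2) (coroot (w θ)) = 1 := by
    rw [coroot_map hiso, cInner_map hiso]
    exact hone θ hθ
  have := RootData.mem_cPiLam_of_cInner_coroot_eq_one hR (hreg.map hR hwW) hdom
    ((RootData.map_mem_roots_iff hR hwW).mpr hθ_root) h1
  rwa [RootData.cPiLam, RootData.cIntegralRoots_eq_of_mem_cWLam hR hw] at this

/-- If `λ ∈ V_ℂ` is regular with `⟨λ,α∨⟩ = 1` for all `α ∈ Θ`, and `w ∈ W_λ` is such that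
`wλ` is dominant, then `wΘ ⊆ Π_λ`. -/
theorem image_theta_subset_cPiLam (R : RootData V) (hR : R.IsRootSystem)
    (Θ : Set V) (hΘ : Θ ⊆ R.base) (hne : Θ ≠ R.base)
    (lam : V × V) (hreg : R.CIsRegular lam)
    (hone : ∀ α ∈ Θ, cInner lam (coroot α) = 1)
    (w : V ≃ₗ[ℝ] V) (hw : w ∈ R.cWLam lam)
    (hdom : R.CIsDominant (w lam.1, w lam.2)) :
    ⇑w '' Θ ⊆ R.cPiLam lam :=
  image_theta_subset_cPiLam_general R hR Θ hΘ lam hreg hone w hw hdom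

end
end

section
/- Let S be a nonempty subset of {1,…,n} and let f₁, f₂ : {1,…,n} → ℝ be functions that agree at every point of {1,…,n} ∖ S. Then f₁ ⊴ f₂ (with respect to the ordered set T = {1,…,n}) if and only if f₁|_S ⊴ f₂|_S (with respect to the ordered set T = S). -/
/-!
A function `f₁` satisfies `f₁* ≤ f₂*` pointwise iff at every level `x`, `f₁` takes at most as
many values above `x` as `f₂` does. The initial segments of `T` are exactly the sets
`{t ∈ T | t ≤ m}`, so `f₁ ⊴ f₂` on `T` says that these counting inequalities hold on
`{t ∈ T | t ≤ m}` for every `m`. For `T = {1,…,n}` the count splits into the part inside `S` and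
the part outside `S`, and the latter is the same for `f₁` and `f₂` since they agree there.
-/

/-- `g` is the decreasing rearrangement `f*` of `f` on the finite set `T`:
`g = τf` for some permutation `τ` of `T` (acting by `(τf)(t) = f(τ⁻¹ t)`), and `g` is
decreasing on `T`. (Values outside `T` are irrelevant.) -/
def IsDecRearrangeOn (T : Finset ℕ) (f g : ℕ → ℝ) : Prop :=
  (∃ τ : {x // x ∈ T} ≃ {x // x ∈ T}, ∀ t : {x // x ∈ T}, g t = f (τ.symm t)) ∧
  (∀ s ∈ T, ∀ t ∈ T, s ≤ t → g t ≤ g s)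

/-- `f₁ ⪯ f₂` on `T`: `f₁*(t) ≤ f₂*(t)` for all `t ∈ T`, where `f*` denotes the
decreasing rearrangement on `T`. -/
def PrecOn (T : Finset ℕ) (f₁ f₂ : ℕ → ℝ) : Prop :=
  ∀ g₁ g₂ : ℕ → ℝ, IsDecRearrangeOn T f₁ g₁ → IsDecRearrangeOn T f₂ g₂ →
    ∀ t ∈ T, g₁ t ≤ g₂ t

/-- `T_r = {t₁, …, t_r}`, the set of the `r` smallest elements of `T`. -/
def initialSeg (T : Finset ℕ) (r : ℕ) : Finset ℕ := ((T.sort (· ≤ ·)).take r).toFinset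

/-- `f₁ ⊴ f₂` on `T`: `f₁|_{T_r} ⪯ f₂|_{T_r}` for all `1 ≤ r ≤ card T`. -/
def TriangleOn (T : Finset ℕ) (f₁ f₂ : ℕ → ℝ) : Prop :=
  ∀ r : ℕ, 1 ≤ r → r ≤ T.card → PrecOn (initialSeg T r) f₁ f₂

open Finset

lemma card_filter_eq_of_perm {T : Finset ℕ} {f g : ℕ → ℝ} (τ : T ≃ T)
    (hτ : ∀ t : T, g t = f (τ.symm t)) (p : ℝ → Prop) [DecidablePred p] :
    #{t ∈ T | p (g t)} = #{t ∈ T | p (f t)} := by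
  simp only [card_filter, ← sum_coe_sort T, hτ]
  exact Equiv.sum_comp τ.symm fun t : T => if p (f t) then 1 else 0

lemma exists_isDecRearrangeOn (T : Finset ℕ) (f : ℕ → ℝ) : ∃ g, IsDecRearrangeOn T f g := by
  set e : Fin #T ≃o T := T.orderIsoOfFin rfl
  -- sorting `-f` increasingly sorts `f` decreasingly
  set σ : Equiv.Perm (Fin #T) := Tuple.sort fun i => -f (e i)
  refine ⟨fun t => if ht : t ∈ T then f (e (σ (e.symm ⟨t, ht⟩))) else 0,
    ⟨(e.toEquiv.symm.trans (σ.trans e.toEquiv)).symm, fun t => ?_⟩, fun s hs t ht hst => ?_⟩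
  · simp
  · have hst' : e.symm ⟨s, hs⟩ ≤ e.symm ⟨t, ht⟩ := e.symm.monotone hst
    simpa [dif_pos hs, dif_pos ht] using Tuple.monotone_sort (fun i => -f (e i)) hst'

lemma card_filter_lt_card_filter {α : Type*} {T : Finset α} {p q : α → Prop} [DecidablePred p]
    [DecidablePred q] (hpq : ∀ s ∈ T, p s → q s) {t : α} (ht : t ∈ T) (hqt : q t) (hpt : ¬p t) :
    #{s ∈ T | p s} < #{s ∈ T | q s} := by
  have hsub : {s ∈ T | p s} ⊆ {s ∈ T | q s} := fun s hs => by
    rw [mem_filter] at hs ⊢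
    exact ⟨hs.1, hpq s hs.1 hs.2⟩
  exact card_lt_card ((ssubset_iff_of_subset hsub).mpr ⟨t, mem_filter.mpr ⟨ht, hqt⟩,
    fun h => hpt (mem_filter.mp h).2⟩)

lemma precOn_iff_card_filter_le (T : Finset ℕ) (f₁ f₂ : ℕ → ℝ) :
    PrecOn T f₁ f₂ ↔ ∀ x : ℝ, #{t ∈ T | x < f₁ t} ≤ #{t ∈ T | x < f₂ t} := by
  constructor
  · intro h x
    obtain ⟨g₁, hg₁⟩ := exists_isDecRearrangeOn T f₁
    obtain ⟨g₂, hg₂⟩ := exists_isDecRearrangeOn T f₂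
    obtain ⟨τ₁, hτ₁⟩ := hg₁.1
    obtain ⟨τ₂, hτ₂⟩ := hg₂.1
    rw [← card_filter_eq_of_perm τ₁ hτ₁, ← card_filter_eq_of_perm τ₂ hτ₂]
    exact card_le_card fun t ht => by
      simp only [mem_filter] at ht ⊢
      exact ⟨ht.1, ht.2.trans_le (h g₁ g₂ hg₁ hg₂ t ht.1)⟩
  · rintro h g₁ g₂ ⟨⟨τ₁, hτ₁⟩, hg₁⟩ ⟨⟨τ₂, hτ₂⟩, hg₂⟩ t ht
    -- if `g₂ t < g₁ t`, then at the level `g₂ t` at least `#{s ∈ T | s ≤ t}` values of `g₁`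
    -- but at most `#{s ∈ T | s < t}` values of `g₂` lie strictly above it
    by_contra! hlt
    have hcard := h (g₂ t)
    rw [← card_filter_eq_of_perm τ₁ hτ₁, ← card_filter_eq_of_perm τ₂ hτ₂] at hcard
    have hle : {s ∈ T | s ≤ t} ⊆ {s ∈ T | g₂ t < g₁ s} := fun s hs => by
      simp only [mem_filter] at hs ⊢
      exact ⟨hs.1, hlt.trans_le (hg₁ s hs.1 t ht hs.2)⟩
    have hge : {s ∈ T | g₂ t < g₂ s} ⊆ {s ∈ T | s < t} := fun s hs => by
      simp only [mem_filter] at hs ⊢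
      exact ⟨hs.1, not_le.mp fun hts => (hg₂ t ht s hs.1 hts).not_gt hs.2⟩
    have hlt' : #{s ∈ T | s < t} < #{s ∈ T | s ≤ t} :=
      card_filter_lt_card_filter (fun _ _ => le_of_lt) ht le_rfl (lt_irrefl t)
    exact hcard.not_gt ((card_le_card hge).trans_lt (hlt'.trans_le (card_le_card hle)))

lemma card_filter_le_orderEmbOfFin {α : Type*} [LinearOrder α] (T : Finset α) (i : Fin #T) :
    #{s ∈ T | s ≤ T.orderEmbOfFin rfl i} = i + 1 := by
  have : {s ∈ T | s ≤ T.orderEmbOfFin rfl i} = (Iic i).map (T.orderEmbOfFin rfl).toEmbedding := by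
    ext s
    simp only [mem_filter, mem_map, mem_Iic, RelEmbedding.coe_toEmbedding]
    constructor
    · rintro ⟨hs, hsi⟩
      obtain ⟨j, rfl⟩ : s ∈ Set.range (T.orderEmbOfFin rfl) := by
        rwa [range_orderEmbOfFin]
      exact ⟨j, (T.orderEmbOfFin rfl).le_iff_le.mp hsi, rfl⟩
    · rintro ⟨j, hji, rfl⟩
      exact ⟨orderEmbOfFin_mem T rfl j, (T.orderEmbOfFin rfl).le_iff_le.mpr hji⟩
  rw [this, card_map, Fin.card_Iic]

lemma mem_initialSeg {T : Finset ℕ} {r t : ℕ} :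
    t ∈ initialSeg T r ↔ t ∈ T ∧ #{s ∈ T | s ≤ t} ≤ r := by
  rw [initialSeg, List.mem_toFinset, List.mem_take_iff_getElem]
  constructor
  · rintro ⟨j, hj, rfl⟩
    have hjT : j < #T := by simpa using (lt_min_iff.mp hj).2
    have := card_filter_le_orderEmbOfFin T ⟨j, hjT⟩
    rw [orderEmbOfFin_apply] at this
    exact ⟨(mem_sort _).mp (List.getElem_mem _), this.trans_le (lt_min_iff.mp hj).1⟩
  · rintro ⟨ht, hcard⟩
    obtain ⟨j, rfl⟩ : t ∈ Set.range (T.orderEmbOfFin rfl) := by rwa [range_orderEmbOfFin]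
    rw [card_filter_le_orderEmbOfFin] at hcard
    exact ⟨j, by simp; omega, (orderEmbOfFin_apply T rfl j).symm⟩

lemma initialSeg_card_filter_le (T : Finset ℕ) (m : ℕ) :
    initialSeg T #{s ∈ T | s ≤ m} = {s ∈ T | s ≤ m} := by
  ext t
  rw [mem_initialSeg, mem_filter]
  refine and_congr_right fun ht => ⟨fun hcard => ?_, fun htm => ?_⟩
  · by_contra! hmt
    exact hcard.not_gt (card_filter_lt_card_filter (fun _ _ hs => hs.trans hmt.le) ht le_rfl
      hmt.not_ge)
  · exact card_le_card (monotone_filter_right _ fun _ _ hs => le_trans hs htm)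

lemma exists_initialSeg_eq_filter_le {T : Finset ℕ} {r : ℕ} (hr : 1 ≤ r) (hrT : r ≤ #T) :
    ∃ m, initialSeg T r = {s ∈ T | s ≤ m} := by
  refine ⟨T.orderEmbOfFin rfl ⟨r - 1, by omega⟩, ?_⟩
  have := card_filter_le_orderEmbOfFin T ⟨r - 1, by omega⟩
  rw [Fin.val_mk, Nat.sub_add_cancel hr] at this
  conv_lhs => rw [← this]
  exact initialSeg_card_filter_le T _

lemma triangleOn_iff_forall_precOn_filter_le (T : Finset ℕ) (f₁ f₂ : ℕ → ℝ) :
    TriangleOn T f₁ f₂ ↔ ∀ m, PrecOn {s ∈ T | s ≤ m} f₁ f₂ := by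
  constructor
  · intro h m
    rcases Nat.eq_zero_or_pos #{s ∈ T | s ≤ m} with hzero | hpos
    · rw [card_eq_zero.mp hzero]
      exact fun _ _ _ _ t ht => absurd ht (notMem_empty t)
    · rw [← initialSeg_card_filter_le]
      exact h _ hpos (card_filter_le _ _)
  · intro h r hr hrT
    obtain ⟨m, hm⟩ := exists_initialSeg_eq_filter_le hr hrT
    exact hm ▸ h m

lemma precOn_iff_of_subset_of_eqOn_sdiff {A B : Finset ℕ} {f₁ f₂ : ℕ → ℝ} (hAB : A ⊆ B)
    (hf : Set.EqOn f₁ f₂ ↑(B \ A)) : PrecOn B f₁ f₂ ↔ PrecOn A f₁ f₂ := by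
  have hsplit : ∀ (f : ℕ → ℝ) (x : ℝ),
      #{t ∈ B | x < f t} = #{t ∈ A | x < f t} + #{t ∈ B \ A | x < f t} := fun f x => by
    rw [← card_union_of_disjoint (disjoint_filter_filter disjoint_sdiff), ← filter_union,
      union_sdiff_of_subset hAB]
  have hoff : ∀ x : ℝ, #{t ∈ B \ A | x < f₁ t} = #{t ∈ B \ A | x < f₂ t} := fun x => by
    rw [filter_congr fun t ht => by rw [hf (mem_coe.mpr ht)]]
  simp only [precOn_iff_card_filter_le, hsplit, hoff, Nat.add_le_add_iff_right]

theorem triangleOn_iff_of_agree_off_general (n : ℕ) (S : Finset ℕ)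
    (hS : S ⊆ Finset.Icc 1 n)
    (f₁ f₂ : ℕ → ℝ) (hagree : ∀ t ∈ Finset.Icc 1 n \ S, f₁ t = f₂ t) :
    TriangleOn (Finset.Icc 1 n) f₁ f₂ ↔ TriangleOn S f₁ f₂ := by
  simp only [triangleOn_iff_forall_precOn_filter_le]
  refine forall_congr' fun m => precOn_iff_of_subset_of_eqOn_sdiff
    (monotone_filter_left _ hS) fun t ht => hagree t ?_
  simp only [coe_sdiff, coe_filter, Set.mem_sdiff, Set.mem_ofPred_eq, not_and] at ht
  exact mem_sdiff.mpr ⟨ht.1.1, fun htS => ht.2 htS ht.1.2⟩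

/-- Lemma 7.3.1: if `f₁` and `f₂` agree off `S ⊆ {1,…,n}`, then `f₁ ⊴ f₂` on `{1,…,n}` iff
`f₁|_S ⊴ f₂|_S` on `S`. -/
theorem triangleOn_iff_of_agree_off (n : ℕ) (S : Finset ℕ)
    (hS : S ⊆ Finset.Icc 1 n) (hSne : S.Nonempty)
    (f₁ f₂ : ℕ → ℝ) (hagree : ∀ t ∈ Finset.Icc 1 n \ S, f₁ t = f₂ t) :
    TriangleOn (Finset.Icc 1 n) f₁ f₂ ↔ TriangleOn S f₁ f₂ :=
  triangleOn_iff_of_agree_off_general n S hS f₁ f₂ hagree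
end
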